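/- arXiv:2206.02907 — 2 statements merged into one kernel-verified Lean document; each statement's English description precedes it below -/
import Mathlib

section
/- Let ℍ be the real quaternions with real inner product ⟪u,v⟫ = Re(u · star v), and let e : Fin 4 → ℍ be the standard basis e = (1, i, j, k). If ψ : Fin 4 → ℍ satisfies Σ_{α} e_α · ψ_α = 0 (quaternion multiplication), then for every φ ∈ ℍ one has Σ_{α} ⟪star(e_α) · φ, ψ_α⟫ = 0. (That is, the image of the embedding ι(φ) = (¼ star(e_α) · φ)_α is orthogonal to the kernel of the Clifford contraction ψ ↦ Σ e_α ψ_α.) -/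
open scoped RealInnerProductSpace

/-- The standard basis `(1, i, j, k)` of the quaternions. -/
noncomputable def quatBasis : Fin 4 → Quaternion ℝ :=
  ![1, ⟨0, 1, 0, 0⟩, ⟨0, 0, 1, 0⟩, ⟨0, 0, 0, 1⟩]

namespace Quaternion

theorem re_mul_comm {R : Type*} [CommRing R] (a b : Quaternion R) : (a * b).re = (b * a).re := by
  simp only [re_mul]; ring

theorem inner_star_mul_left (a b c : Quaternion ℝ) : ⟪star a * b, c⟫ = ⟪b, a * c⟫ := by
  rw [inner_def, inner_def, star_mul, mul_assoc, re_mul_comm, mul_assoc]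

end Quaternion

/-- If `ψ : Fin 4 → ℍ` lies in the kernel of the Clifford contraction
`ψ ↦ Σ_α e_α · ψ_α`, then for every `φ ∈ ℍ` the tuple `(star(e_α) · φ)_α` is orthogonal
to `ψ`: `Σ_α ⟪star(e_α) · φ, ψ_α⟫ = 0`. -/
theorem orthogonal_iota_ker_clifford
    (ψ : Fin 4 → Quaternion ℝ) (hψ : ∑ α, quatBasis α * ψ α = 0)
    (φ : Quaternion ℝ) :
    ∑ α, ⟪star (quatBasis α) * φ, ψ α⟫ = 0 := by
  simp only [Quaternion.inner_star_mul_left]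
  rw [← inner_sum, hψ, inner_zero_right]
end

section
/- Let ℍ be the real quaternions, e : Fin 4 → ℍ the standard basis (1, i, j, k), and ε : Fin 4 → ℝ the signs (1, −1, 1, −1) (so that j · e_α · j⁻¹ = ε_α · e_α). For φ : Fin 4 → ℍ define ρ(φ) = −Σ_{α} star(e_α) · φ_α ∈ ℍ and the projection P(φ) : Fin 4 → ℍ by P(φ)_α = φ_α + ¼ · e_α · ρ(φ). Define the action of j by (j•φ)_α = ε_α · (j · φ_α · j⁻¹). Then P(j•φ)_α = ε_α · (j · P(φ)_α · j⁻¹) for all α ∈ Fin 4; that is, the projection P onto the 3/2-spinor part commutes with the action of j (Pin(2)-equivariance of π⁻). -/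
/-- The signs `(1, −1, 1, −1)`, so that `j · e_α · j⁻¹ = ε_α · e_α`. -/
noncomputable def quatSigns : Fin 4 → ℝ := ![1, -1, 1, -1]

/-- The Clifford contraction `ρ(φ) = −Σ_α star(e_α) · φ_α`. -/
noncomputable def rhoContr (φ : Fin 4 → Quaternion ℝ) : Quaternion ℝ :=
  -∑ α, star (quatBasis α) * φ α

/-- The projection onto the `3/2`-spinor part, `P(φ)_α = φ_α + ¼ e_α · ρ(φ)`. -/
noncomputable def projThreeHalf (φ : Fin 4 → Quaternion ℝ) : Fin 4 → Quaternion ℝ :=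
  fun α => φ α + (1 / 4 : ℝ) • (quatBasis α * rhoContr φ)

/-- The quaternion unit `j`. -/
noncomputable def quatJ : Quaternion ℝ := ⟨0, 0, 1, 0⟩

/-!
Conjugation by `j` is an `ℝ`-algebra automorphism of `ℍ` that commutes with `star` (as
`j⁻¹ = star j`) and multiplies `e_α` by `ε_α`. It therefore carries `ρ(j • φ)` to `j ρ(φ) j⁻¹`,
and in the term `e_α · ρ` of `P` the sign it produces cancels against `ε_α`, because `ε_α² = 1`.
-/

lemma normSq_quatJ : Quaternion.normSq quatJ = 1 := by
  rw [Quaternion.normSq_def']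
  norm_num [quatJ]

lemma quatJ_ne_zero : quatJ ≠ 0 :=
  Quaternion.normSq_ne_zero.mp (by simp [normSq_quatJ])

lemma quatJ_inv : quatJ⁻¹ = star quatJ := by
  simp [Quaternion.inv_def, normSq_quatJ]

noncomputable def conjJ : Quaternion ℝ ≃ₐ[ℝ] Quaternion ℝ :=
  MulSemiringAction.toAlgEquiv ℝ _ (ConjAct.toConjAct (Units.mk0 quatJ quatJ_ne_zero))

lemma conjJ_apply (x : Quaternion ℝ) : conjJ x = quatJ * x * quatJ⁻¹ := by
  simp [conjJ, ConjAct.units_smul_def]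

lemma conjJ_star (x : Quaternion ℝ) : conjJ (star x) = star (conjJ x) := by
  simp only [conjJ_apply, quatJ_inv, star_mul, star_star, mul_assoc]

lemma conjJ_quatBasis (α : Fin 4) : conjJ (quatBasis α) = quatSigns α • quatBasis α := by
  rw [conjJ_apply, quatJ_inv]
  fin_cases α <;> ext <;>
    simp [Quaternion.re_mul, Quaternion.imI_mul, Quaternion.imJ_mul, Quaternion.imK_mul] <;>
    simp [quatBasis, quatSigns, quatJ, Quaternion.imI_one, Quaternion.imK_one]

lemma quatSigns_mul_self (α : Fin 4) : quatSigns α * quatSigns α = 1 := by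
  fin_cases α <;> norm_num [quatSigns]

lemma star_quatBasis_mul_smul_conjJ (β : Fin 4) (x : Quaternion ℝ) :
    star (quatBasis β) * (quatSigns β • conjJ x) = conjJ (star (quatBasis β) * x) := by
  rw [map_mul, conjJ_star, conjJ_quatBasis, Quaternion.star_smul, mul_smul_comm, smul_mul_assoc]

lemma quatBasis_mul_conjJ (α : Fin 4) (x : Quaternion ℝ) :
    quatBasis α * conjJ x = quatSigns α • conjJ (quatBasis α * x) := by
  rw [map_mul, conjJ_quatBasis, smul_mul_assoc, smul_smul, quatSigns_mul_self, one_smul]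

lemma rhoContr_smul_conjJ (φ : Fin 4 → Quaternion ℝ) :
    rhoContr (fun β => quatSigns β • conjJ (φ β)) = conjJ (rhoContr φ) := by
  simp only [rhoContr, star_quatBasis_mul_smul_conjJ, map_neg, map_sum]

/-- `Pin(2)`-equivariance of the projection `π⁻` onto the `3/2`-spinors: the projection `P`
commutes with the action of `j`, given by `(j • φ)_α = ε_α · (j · φ_α · j⁻¹)`. -/
theorem projThreeHalf_j_equivariant (φ : Fin 4 → Quaternion ℝ) (α : Fin 4) :
    projThreeHalf (fun β => quatSigns β • (quatJ * φ β * quatJ⁻¹)) α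
      = quatSigns α • (quatJ * projThreeHalf φ α * quatJ⁻¹) := by
  simp only [← conjJ_apply, projThreeHalf, rhoContr_smul_conjJ, quatBasis_mul_conjJ, map_add,
    map_smul, smul_add, smul_comm (1 / 4 : ℝ) (quatSigns α)]
end
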